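/- For any a > 0 and q₀ ∈ [1, √Q₁] (with Q₁ := 1 + (e^{4a}+4a)/(8a²) - e^{2a}√(e^{4a}+8a)/(8a²)), the inequality (1 + 2a)e^{-2a} - 2a e^{-2a} q₀² ≥ √(q₀² - 1) holds. -/

import Mathlib

/-!
With `E = exp (2a)`, the bound `Q₁` equals `1 + t²`, where `t` is the positive root of
`2a t² + E t = 1`. Hence `u = √(q₀² - 1)` lies in `[0, t]`, and since `2a u² + E u` is increasing
on `[0, ∞)` we get `E u ≤ 1 - 2a u² = 1 + 2a - 2a q₀²`; multiplying by `exp (-2a)` gives the claim.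
-/

open Real

noncomputable def quadRoot (c b : ℝ) : ℝ := (√(b ^ 2 + 4 * c) - b) / (2 * c)

section quadRoot

variable {c : ℝ} (b : ℝ)

lemma quadRoot_nonneg (hc : 0 < c) : 0 ≤ quadRoot c b := by
  have : b ≤ √(b ^ 2 + 4 * c) :=
    (le_abs_self b).trans (abs_le_sqrt (by linarith))
  exact div_nonneg (by linarith) (by linarith)

lemma sq_sqrt_discrim (hc : 0 < c) : √(b ^ 2 + 4 * c) ^ 2 = b ^ 2 + 4 * c :=
  sq_sqrt (by positivity)

lemma quadRoot_spec (hc : 0 < c) : c * quadRoot c b ^ 2 + b * quadRoot c b = 1 := by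
  have := sq_sqrt_discrim b hc
  unfold quadRoot
  generalize √(b ^ 2 + 4 * c) = s at this ⊢
  field_simp
  linear_combination this

lemma quadRoot_sq (hc : 0 < c) :
    quadRoot c b ^ 2 = (b ^ 2 + 2 * c - b * √(b ^ 2 + 4 * c)) / (2 * c ^ 2) := by
  have := sq_sqrt_discrim b hc
  unfold quadRoot
  generalize √(b ^ 2 + 4 * c) = s at this ⊢
  field_simp
  linear_combination this

lemma mul_le_one_sub_of_le_quadRoot (hc : 0 < c) (hb : 0 ≤ b) {u : ℝ} (hu₀ : 0 ≤ u)
    (hu : u ≤ quadRoot c b) : b * u ≤ 1 - c * u ^ 2 := by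
  have hmono : c * u ^ 2 + b * u ≤ c * quadRoot c b ^ 2 + b * quadRoot c b := by gcongr
  linarith [quadRoot_spec b hc]

end quadRoot

theorem q0_inequality (a q₀ : ℝ) (ha : 0 < a)
    (hq : q₀ ∈ Set.Icc 1 (Real.sqrt (1 + (Real.exp (4 * a) + 4 * a) / (8 * a ^ 2) -
      Real.exp (2 * a) * Real.sqrt (Real.exp (4 * a) + 8 * a) / (8 * a ^ 2)))) :
    (1 + 2 * a) * Real.exp (-(2 * a)) - 2 * a * Real.exp (-(2 * a)) * q₀ ^ 2 ≥
      Real.sqrt (q₀ ^ 2 - 1) := by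
  obtain ⟨hq₁, hq₂⟩ := hq
  set E := exp (2 * a)
  set t := quadRoot (2 * a) E
  have hE4 : exp (4 * a) = E ^ 2 := by rw [← exp_nat_mul]; ring_nf
  have hQ₁ : 1 + (exp (4 * a) + 4 * a) / (8 * a ^ 2) - E * √(exp (4 * a) + 8 * a) / (8 * a ^ 2)
      = 1 + t ^ 2 := by
    rw [quadRoot_sq E (by positivity), hE4]
    field_simp
    ring_nf
  rw [hQ₁] at hq₂
  have hu : √(q₀ ^ 2 - 1) ≤ t := by
    have hq_sq : q₀ ^ 2 ≤ 1 + t ^ 2 := (sq_le_sq₀ (by linarith) (sqrt_nonneg _)).2 hq₂ |>.trans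
      (sq_sqrt (by positivity)).le
    exact sqrt_le_iff.2 ⟨quadRoot_nonneg E (by positivity), by linarith⟩
  have key : E * √(q₀ ^ 2 - 1) ≤ 1 + 2 * a - 2 * a * q₀ ^ 2 := by
    have := mul_le_one_sub_of_le_quadRoot E (by positivity) (exp_pos _).le (sqrt_nonneg _) hu
    rw [sq_sqrt (by nlinarith)] at this
    linarith
  calc √(q₀ ^ 2 - 1) = exp (-(2 * a)) * (E * √(q₀ ^ 2 - 1)) := by
        rw [← mul_assoc, ← exp_add, neg_add_cancel, exp_zero, one_mul]
    _ ≤ exp (-(2 * a)) * (1 + 2 * a - 2 * a * q₀ ^ 2) := by gcongr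
    _ = _ := by ring
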